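/- arXiv:1804.00341 — 2 statements merged into one kernel-verified Lean document; each statement's English description precedes it below -/
import Mathlib

section
/- The proximal operator of the ℓ0-plus-quadratic penalty ψ(s) = α·[s ≠ 0] + β s² with α, β ≥ 0 and parameter γ > 0 is scaled hard thresholding: the minimum of γψ(s) + (1/2)(s − x)² over s is attained at s = x/(1 + 2γβ) if x² > 2γα(1 + 2γβ), and at s = 0 if x² < 2γα(1 + 2γβ). -/
/-- The ℓ0 penalty on ℝ. -/
noncomputable def l0pen (s : ℝ) : ℝ := if s ≠ 0 then 1 else 0

/-!
Completing the square, `γβs² + (s − x)²/2 = (D/2)(s − x/D)² + γβx²/D` with `D = 1 + 2γβ`,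
so the prox problem becomes `min_s γα·[s ≠ 0] + (D/2)(s − t)²` with `t = x/D`, up to a constant.
Its only candidates are `s = t` (value `γα`) and `s = 0` (value `(D/2)t² = x²/(2D)`),
and whichever value is smaller wins.
-/

theorem l0pen_zero : l0pen 0 = 0 := if_neg (not_not.2 rfl)

theorem l0pen_of_ne_zero {s : ℝ} (hs : s ≠ 0) : l0pen s = 1 := if_pos hs

section HardThreshold

variable {lam c t : ℝ}

theorem l0pen_add_sq_le_of_ne_zero (hc : 0 ≤ c) {s : ℝ} (hs : s ≠ 0) :
    lam ≤ lam * l0pen s + c * (s - t) ^ 2 := by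
  rw [l0pen_of_ne_zero hs, mul_one]
  exact le_add_of_nonneg_right (by positivity)

theorem l0pen_add_sq_isMin_center (hlam : 0 ≤ lam) (hc : 0 ≤ c) (hlt : lam < c * t ^ 2)
    (s : ℝ) : lam * l0pen t + c * (t - t) ^ 2 ≤ lam * l0pen s + c * (s - t) ^ 2 := by
  have ht : t ≠ 0 := by
    rintro rfl
    norm_num at hlt
    linarith
  rw [l0pen_of_ne_zero ht, sub_self, mul_one]
  rcases eq_or_ne s 0 with rfl | hs
  · simpa [l0pen_zero] using hlt.le
  · simpa using l0pen_add_sq_le_of_ne_zero hc hs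

theorem l0pen_add_sq_isMin_zero (hc : 0 ≤ c) (hlt : c * t ^ 2 < lam) (s : ℝ) :
    lam * l0pen 0 + c * (0 - t) ^ 2 ≤ lam * l0pen s + c * (s - t) ^ 2 := by
  rcases eq_or_ne s 0 with rfl | hs
  · rfl
  · simpa [l0pen_zero] using hlt.le.trans (l0pen_add_sq_le_of_ne_zero hc hs)

end HardThreshold

theorem mul_sq_add_half_sq_sub_eq {a : ℝ} (ha : 1 + 2 * a ≠ 0) (x s : ℝ) :
    a * s ^ 2 + 1 / 2 * (s - x) ^ 2 =
      (1 + 2 * a) / 2 * (s - x / (1 + 2 * a)) ^ 2 + a * x ^ 2 / (1 + 2 * a) := by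
  have h : (1 + 2 * a) / 2 * (s - x / (1 + 2 * a)) ^ 2 + a * x ^ 2 / (1 + 2 * a) =
      (1 + 2 * a) / 2 * s ^ 2 - s * x + x ^ 2 / 2 := by
    field_simp
    ring
  linear_combination -h

theorem prox_objective_eq_complete_square {α β γ : ℝ} (hD : 1 + 2 * γ * β ≠ 0) (x s : ℝ) :
    γ * (α * l0pen s + β * s ^ 2) + 1 / 2 * (s - x) ^ 2 =
      γ * α * l0pen s + (1 + 2 * γ * β) / 2 * (s - x / (1 + 2 * γ * β)) ^ 2
        + γ * β * x ^ 2 / (1 + 2 * γ * β) := by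
  rw [mul_assoc 2] at hD ⊢
  linear_combination mul_sq_add_half_sq_sub_eq hD x s

theorem half_mul_div_sq {D : ℝ} (hD : D ≠ 0) (x : ℝ) : D / 2 * (x / D) ^ 2 = x ^ 2 / (2 * D) := by
  field_simp

/-- The proximal operator of `ψ(s) = α·[s ≠ 0] + βs²` is scaled hard thresholding:
the minimum of `γψ(s) + (1/2)(s − x)²` is attained at `s = x/(1 + 2γβ)` if
`x² > 2γα(1 + 2γβ)`, and at `s = 0` if `x² < 2γα(1 + 2γβ)`. -/
theorem l0_quadratic_prox_scaled_hard_thresholding (α β γ x : ℝ)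
    (hα : 0 ≤ α) (hβ : 0 ≤ β) (hγ : 0 < γ) :
    (x ^ 2 > 2 * γ * α * (1 + 2 * γ * β) →
      ∀ s : ℝ,
        γ * (α * l0pen (x / (1 + 2 * γ * β)) + β * (x / (1 + 2 * γ * β)) ^ 2)
            + (1 / 2) * (x / (1 + 2 * γ * β) - x) ^ 2
          ≤ γ * (α * l0pen s + β * s ^ 2) + (1 / 2) * (s - x) ^ 2) ∧
    (x ^ 2 < 2 * γ * α * (1 + 2 * γ * β) →
      ∀ s : ℝ,
        γ * (α * l0pen 0 + β * (0 : ℝ) ^ 2) + (1 / 2) * ((0 : ℝ) - x) ^ 2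
          ≤ γ * (α * l0pen s + β * s ^ 2) + (1 / 2) * (s - x) ^ 2) := by
  have hD : 0 < 1 + 2 * γ * β := by positivity
  simp only [prox_objective_eq_complete_square hD.ne']
  refine ⟨fun hx s => ?_, fun hx s => ?_⟩
  · refine add_le_add_left (l0pen_add_sq_isMin_center (by positivity) (by positivity) ?_ s) _
    rw [half_mul_div_sq hD.ne', lt_div_iff₀ (by positivity)]
    linarith
  · refine add_le_add_left (l0pen_add_sq_isMin_zero (by positivity) ?_ s) _
    rw [half_mul_div_sq hD.ne', div_lt_iff₀ (by positivity)]
    linarith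
end

section
/- Let ψ: ℝᵈ → ℝ be convex with L-Lipschitz subgradients, X a data matrix, γ = 1/‖X‖₂², and consider the proximal gradient iteration B_{k+1} = prox_{γψ}(B_k − γ Xᵀ(X B_k − X A_k)) with the Procrustes update for A_k. Then the objective f(A,B) = (1/2)‖X − X B Aᵀ‖_F² + ψ(B) decreases monotonically: f(A_{k+1}, B_{k+1}) − f(A_k, B_k) ≤ −(1/2)‖X‖₂² ‖B_k − B_{k+1}‖_F². -/
open Matrix

noncomputable def frobSq {m n : ℕ} (M : Matrix (Fin m) (Fin n) ℝ) : ℝ :=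
  ∑ i, ∑ j, (M i j) ^ 2

noncomputable def matIp {m n : ℕ} (M N : Matrix (Fin m) (Fin n) ℝ) : ℝ :=
  ∑ i, ∑ j, M i j * N i j

/-- The spectral (operator) norm of a matrix. -/
noncomputable def specNorm {m n : ℕ} (X : Matrix (Fin m) (Fin n) ℝ) : ℝ :=
  ‖LinearMap.toContinuousLinearMap (Matrix.toEuclideanLin X)‖

/-! The loss `B ↦ ½‖X - X B A₀ᵀ‖_F²` is quadratic, with gradient `G = Xᵀ(XB₀ - XA₀)` at `B₀`
and curvature `XᵀX`, whose size is at most `‖X‖₂²`; so at `B₁` it exceeds its value at `B₀` by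
at most `⟪G, B₁ - B₀⟫ + ½‖X‖₂²‖B₁ - B₀‖²`. First-order optimality of the prox of the convex `ψ`
(its argument minus its value is a subgradient) shows that the prox-gradient step with step
`1/‖X‖₂²` makes `ψ + ⟪G, · - B₀⟫` drop by at least `‖X‖₂²‖B₁ - B₀‖²`. Together these give the
decrease with `A₀` kept fixed, and the Procrustes update of `A` lowers the objective further. -/

open Set Filter Topology RealInnerProductSpace

lemma nonneg_of_forall_add_mul_nonneg {a b : ℝ} (h : ∀ t ∈ Ioc (0 : ℝ) 1, 0 ≤ a + t * b) :
    0 ≤ a := by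
  have hlim : Tendsto (fun t : ℝ => a + t * b) (𝓝[>] 0) (𝓝 a) := by
    have : Continuous fun t : ℝ => a + t * b := by fun_prop
    simpa using (this.tendsto 0).mono_left nhdsWithin_le_nhds
  exact ge_of_tendsto hlim (eventually_of_mem (Ioc_mem_nhdsGT one_pos) h)

section ProximalStep

variable {E : Type*} [NormedAddCommGroup E] [InnerProductSpace ℝ E]

theorem ConvexOn.inner_le_of_isMinOn_prox {φ : E → ℝ} (hφ : ConvexOn ℝ univ φ) {x z : E}
    (hx : IsMinOn (fun y => φ y + (1 / 2) * ‖y - z‖ ^ 2) univ x) (y : E) :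
    ⟪z - x, y - x⟫ ≤ φ y - φ x := by
  rw [← sub_nonneg]
  -- compare `x` with the points `x + t • (y - x)` of the segment and let `t → 0`
  refine nonneg_of_forall_add_mul_nonneg (b := (1 / 2) * ‖y - x‖ ^ 2) fun t ⟨ht0, ht1⟩ => ?_
  have hconv : φ (x + t • (y - x)) ≤ (1 - t) * φ x + t * φ y := by
    have := hφ.2 (mem_univ x) (mem_univ y) (sub_nonneg.2 ht1) ht0.le (by ring)
    simpa only [smul_eq_mul, sub_smul, one_smul, smul_sub, sub_add_eq_add_sub, add_sub_assoc']
      using this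
  have hnorm : ‖x + t • (y - x) - z‖ ^ 2
      = ‖x - z‖ ^ 2 - 2 * t * ⟪z - x, y - x⟫ + t ^ 2 * ‖y - x‖ ^ 2 := by
    rw [show x + t • (y - x) - z = (x - z) + t • (y - x) by abel, norm_add_sq_real,
      inner_smul_right, norm_smul, mul_pow, Real.norm_eq_abs, sq_abs, ← neg_sub z x,
      inner_neg_left]
    ring
  have hmin : φ x + 1 / 2 * ‖x - z‖ ^ 2
      ≤ φ (x + t • (y - x)) + 1 / 2 * ‖x + t • (y - x) - z‖ ^ 2 := hx (mem_univ _)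
  have : 0 ≤ t * (φ y - φ x - ⟪z - x, y - x⟫ + t * (1 / 2 * ‖y - x‖ ^ 2)) := by
    linear_combination hmin + hconv + (1 / 2) * hnorm
  exact nonneg_of_mul_nonneg_right this ht0

theorem ConvexOn.add_inner_add_sq_le_of_isMinOn_prox_grad {φ : E → ℝ} (hφ : ConvexOn ℝ univ φ)
    {x g x' : E} {γ : ℝ}
    (hx' : IsMinOn (fun y => φ y + (1 / 2) * ‖y - (x - γ • g)‖ ^ 2) univ x') :
    φ x' + γ * ⟪g, x' - x⟫ + ‖x' - x‖ ^ 2 ≤ φ x := by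
  have h := hφ.inner_le_of_isMinOn_prox hx' x
  rw [show x - γ • g - x' = -(x' - x) - γ • g by abel, ← neg_sub x' x, inner_sub_left,
    inner_neg_neg, inner_smul_left, inner_neg_right, real_inner_self_eq_norm_sq] at h
  simp only [conj_trivial] at h
  linarith

end ProximalStep

noncomputable def flattenEuclidean (m n : Type*) [Fintype m] [Fintype n] :
    Matrix m n ℝ ≃ₗ[ℝ] EuclideanSpace ℝ (m × n) :=
  (ofLinearEquiv ℝ).symm ≪≫ₗ (LinearEquiv.curry ℝ ℝ m n).symm ≪≫ₗ (WithLp.linearEquiv 2 ℝ _).symm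

@[simp] lemma flattenEuclidean_apply {m n : Type*} [Fintype m] [Fintype n] (M : Matrix m n ℝ)
    (ij : m × n) : flattenEuclidean m n M ij = M ij.1 ij.2 := rfl

section Frobenius

variable {m n : ℕ}

lemma frobSq_eq_norm_sq (M : Matrix (Fin m) (Fin n) ℝ) :
    frobSq M = ‖flattenEuclidean _ _ M‖ ^ 2 := by
  simp [EuclideanSpace.norm_sq_eq, frobSq, Fintype.sum_prod_type]

lemma matIp_eq_inner (M N : Matrix (Fin m) (Fin n) ℝ) :
    matIp M N = ⟪flattenEuclidean _ _ M, flattenEuclidean _ _ N⟫ := by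
  simp [PiLp.inner_apply, matIp, Fintype.sum_prod_type, mul_comm]

lemma frobSq_eq_matIp (M : Matrix (Fin m) (Fin n) ℝ) : frobSq M = matIp M M := by
  rw [frobSq_eq_norm_sq, matIp_eq_inner, real_inner_self_eq_norm_sq]

lemma frobSq_sub (M N : Matrix (Fin m) (Fin n) ℝ) :
    frobSq (M - N) = frobSq M - 2 * matIp M N + frobSq N := by
  simp only [frobSq_eq_norm_sq, matIp_eq_inner, map_sub]
  exact norm_sub_sq_real _ _

lemma frobSq_sub_comm (M N : Matrix (Fin m) (Fin n) ℝ) : frobSq (M - N) = frobSq (N - M) := by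
  simp only [frobSq_eq_norm_sq, map_sub, norm_sub_rev]

lemma matIp_neg_left (M N : Matrix (Fin m) (Fin n) ℝ) : matIp (-M) N = -matIp M N := by
  simp only [matIp_eq_inner, map_neg, inner_neg_left]

lemma matIp_eq_trace (M N : Matrix (Fin m) (Fin n) ℝ) : matIp M N = (Mᵀ * N).trace := by
  simp only [matIp, trace, diag, mul_apply, transpose_apply]
  exact Finset.sum_comm

lemma matIp_transpose_mul {l : ℕ} (P : Matrix (Fin l) (Fin m) ℝ) (M : Matrix (Fin l) (Fin n) ℝ)
    (D : Matrix (Fin m) (Fin n) ℝ) : matIp (Pᵀ * M) D = matIp M (P * D) := by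
  rw [matIp_eq_trace, matIp_eq_trace, transpose_mul, transpose_transpose, Matrix.mul_assoc]

lemma matIp_mul_transpose {l : ℕ} (M : Matrix (Fin m) (Fin n) ℝ) (N : Matrix (Fin m) (Fin l) ℝ)
    (A : Matrix (Fin n) (Fin l) ℝ) : matIp M (N * Aᵀ) = matIp (M * A) N := by
  rw [matIp_eq_trace, matIp_eq_trace, transpose_mul, ← Matrix.mul_assoc, trace_mul_comm,
    Matrix.mul_assoc]

lemma frobSq_mul_transpose {l : ℕ} {A : Matrix (Fin n) (Fin l) ℝ} (hA : Aᵀ * A = 1)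
    (M : Matrix (Fin m) (Fin l) ℝ) : frobSq (M * Aᵀ) = frobSq M := by
  rw [frobSq_eq_matIp, matIp_mul_transpose, Matrix.mul_assoc, hA, Matrix.mul_one,
    ← frobSq_eq_matIp]

lemma frobSq_eq_sum_norm_sq_col (M : Matrix (Fin m) (Fin n) ℝ) :
    frobSq M = ∑ j, ‖WithLp.toLp 2 (Mᵀ j)‖ ^ 2 := by
  simp only [frobSq, EuclideanSpace.norm_sq_eq, transpose_apply, Real.norm_eq_abs, sq_abs]
  exact Finset.sum_comm

lemma frobSq_mul_le {l : ℕ} (X : Matrix (Fin l) (Fin m) ℝ) (D : Matrix (Fin m) (Fin n) ℝ) :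
    frobSq (X * D) ≤ specNorm X ^ 2 * frobSq D := by
  rw [frobSq_eq_sum_norm_sq_col, frobSq_eq_sum_norm_sq_col, Finset.mul_sum]
  gcongr with j
  calc ‖WithLp.toLp 2 ((X * D)ᵀ j)‖ ^ 2 = ‖toEuclideanLin X (WithLp.toLp 2 (Dᵀ j))‖ ^ 2 :=
        rfl
    _ ≤ (specNorm X * ‖WithLp.toLp 2 (Dᵀ j)‖) ^ 2 := by
        gcongr; exact (LinearMap.toContinuousLinearMap (toEuclideanLin X)).le_opNorm _
    _ = specNorm X ^ 2 * ‖WithLp.toLp 2 (Dᵀ j)‖ ^ 2 := mul_pow _ _ _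

end Frobenius

theorem ConvexOn.add_matIp_add_frobSq_le_of_prox_grad {m n : ℕ}
    {ψ : Matrix (Fin m) (Fin n) ℝ → ℝ} (hψ : ConvexOn ℝ univ ψ)
    {B G B' : Matrix (Fin m) (Fin n) ℝ} {γ : ℝ}
    (hB' : ∀ C, ψ B' + (1 / 2) * frobSq (B' - (B - γ • G))
      ≤ ψ C + (1 / 2) * frobSq (C - (B - γ • G))) :
    ψ B' + γ * matIp G (B' - B) + frobSq (B' - B) ≤ ψ B := by
  set e := flattenEuclidean (Fin m) (Fin n)
  have hφ : ConvexOn ℝ univ (ψ ∘ e.symm) := by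
    simpa using hψ.comp_linearMap e.symm.toLinearMap
  have hmin : IsMinOn (fun v => (ψ ∘ e.symm) v + (1 / 2) * ‖v - (e B - γ • e G)‖ ^ 2) univ
      (e B') := by
    intro v _
    simpa [frobSq_eq_norm_sq, e] using hB' (e.symm v)
  simpa [frobSq_eq_norm_sq, matIp_eq_inner, e] using
    hφ.add_inner_add_sq_le_of_isMinOn_prox_grad hmin

theorem frobSq_sub_mul_mul_transpose {n p k : ℕ} (X : Matrix (Fin n) (Fin p) ℝ)
    {A : Matrix (Fin p) (Fin k) ℝ} (hA : Aᵀ * A = 1) (B B' : Matrix (Fin p) (Fin k) ℝ) :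
    frobSq (X - X * B' * Aᵀ) = frobSq (X - X * B * Aᵀ)
      + 2 * matIp (Xᵀ * (X * B - X * A)) (B' - B) + frobSq (X * (B' - B)) := by
  have hsplit : X - X * B' * Aᵀ = (X - X * B * Aᵀ) - X * (B' - B) * Aᵀ := by
    simp only [Matrix.mul_sub, Matrix.sub_mul]; abel
  have hcross : (X - X * B * Aᵀ) * A = -(X * B - X * A) := by
    rw [Matrix.sub_mul, Matrix.mul_assoc (X * B), hA, Matrix.mul_one, neg_sub]
  rw [hsplit, frobSq_sub, frobSq_mul_transpose hA, matIp_mul_transpose, hcross, matIp_neg_left,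
    matIp_transpose_mul]
  ring

theorem spca_descent_lemma_general (n p k : ℕ)
    (X : Matrix (Fin n) (Fin p) ℝ)
    (ψ : Matrix (Fin p) (Fin k) ℝ → ℝ)
    (hψ : ConvexOn ℝ Set.univ ψ)
    (hX : 0 < specNorm X)
    (γ : ℝ) (hγ : γ = 1 / specNorm X ^ 2)
    (A0 A1 B0 B1 : Matrix (Fin p) (Fin k) ℝ)
    (hA0orth : A0ᵀ * A0 = 1)
    (hB1 : ∀ C : Matrix (Fin p) (Fin k) ℝ,
      γ * ψ B1 + (1 / 2) * frobSq (B1 - (B0 - γ • (Xᵀ * (X * B0 - X * A0))))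
        ≤ γ * ψ C + (1 / 2) * frobSq (C - (B0 - γ • (Xᵀ * (X * B0 - X * A0)))))
    (hA1 : ∀ A : Matrix (Fin p) (Fin k) ℝ, Aᵀ * A = 1 →
      frobSq (X - X * B1 * A1ᵀ) ≤ frobSq (X - X * B1 * Aᵀ)) :
    ((1 / 2) * frobSq (X - X * B1 * A1ᵀ) + ψ B1)
        - ((1 / 2) * frobSq (X - X * B0 * A0ᵀ) + ψ B0)
      ≤ -(1 / 2) * specNorm X ^ 2 * frobSq (B0 - B1) := by
  set s := specNorm X ^ 2
  set G := Xᵀ * (X * B0 - X * A0)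
  have hs : 0 < s := by positivity
  have hγs : s * γ = 1 := by rw [hγ]; field_simp
  have hprocrustes : frobSq (X - X * B1 * A1ᵀ) ≤ frobSq (X - X * B1 * A0ᵀ) := hA1 A0 hA0orth
  have hexpand := frobSq_sub_mul_mul_transpose X hA0orth B0 B1
  have hspec : frobSq (X * (B1 - B0)) ≤ s * frobSq (B1 - B0) := frobSq_mul_le X _
  have hprox : γ * ψ B1 + γ * matIp G (B1 - B0) + frobSq (B1 - B0) ≤ γ * ψ B0 :=
    (hψ.smul (by rw [hγ]; positivity)).add_matIp_add_frobSq_le_of_prox_grad hB1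
  rw [frobSq_sub_comm B0 B1]
  linear_combination (1 / 2) * hprocrustes + (1 / 2) * hexpand + (1 / 2) * hspec + s * hprox
    + (ψ B0 - ψ B1 - matIp G (B1 - B0)) * hγs

/-- Descent lemma for the variable-projected proximal gradient method for SPCA:
one iteration (prox step on `B` with step `γ = 1/‖X‖₂²`, followed by the
Procrustes update of `A`) decreases the objective
`f(A,B) = (1/2)‖X − XBAᵀ‖_F² + ψ(B)` by at least `(1/2)‖X‖₂²‖B_k − B_{k+1}‖_F²`. -/
theorem spca_descent_lemma (n p k : ℕ)
    (X : Matrix (Fin n) (Fin p) ℝ)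
    (ψ : Matrix (Fin p) (Fin k) ℝ → ℝ)
    (hψ : ConvexOn ℝ Set.univ ψ)
    (g : Matrix (Fin p) (Fin k) ℝ → Matrix (Fin p) (Fin k) ℝ)
    (hgsub : ∀ B C, ψ B + matIp (g B) (C - B) ≤ ψ C)
    (L : ℝ) (hL : 0 ≤ L)
    (hgLip : ∀ B C, frobSq (g B - g C) ≤ L ^ 2 * frobSq (B - C))
    (hX : 0 < specNorm X)
    (γ : ℝ) (hγ : γ = 1 / specNorm X ^ 2)
    (A0 A1 B0 B1 : Matrix (Fin p) (Fin k) ℝ)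
    (hA0orth : A0ᵀ * A0 = 1)
    (hA0 : ∀ A : Matrix (Fin p) (Fin k) ℝ, Aᵀ * A = 1 →
      frobSq (X - X * B0 * A0ᵀ) ≤ frobSq (X - X * B0 * Aᵀ))
    (hB1 : ∀ C : Matrix (Fin p) (Fin k) ℝ,
      γ * ψ B1 + (1 / 2) * frobSq (B1 - (B0 - γ • (Xᵀ * (X * B0 - X * A0))))
        ≤ γ * ψ C + (1 / 2) * frobSq (C - (B0 - γ • (Xᵀ * (X * B0 - X * A0)))))
    (hA1orth : A1ᵀ * A1 = 1)
    (hA1 : ∀ A : Matrix (Fin p) (Fin k) ℝ, Aᵀ * A = 1 →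
      frobSq (X - X * B1 * A1ᵀ) ≤ frobSq (X - X * B1 * Aᵀ)) :
    ((1 / 2) * frobSq (X - X * B1 * A1ᵀ) + ψ B1)
        - ((1 / 2) * frobSq (X - X * B0 * A0ᵀ) + ψ B0)
      ≤ -(1 / 2) * specNorm X ^ 2 * frobSq (B0 - B1) :=
  spca_descent_lemma_general n p k X ψ hψ hX γ hγ A0 A1 B0 B1 hA0orth hB1 hA1
end
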